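/- Let p ∈ ℕ and let t ↦ B(t) be a continuous family of p × p real matrices such that for every t, B(t)_{ij} ≥ 0 for all i ≠ j and Σ_j B(t)_{ij} = 0 for every i. Let v : [s, T] → ℝ^p be a solution of the linear ODE v'(t) = B(t) v(t) with v_i(s) ≥ 0 for all i. Then v_i(t) ≥ 0 for all i and all t ∈ [s, T]. -/

import Mathlib

/-! The negative-part energy `W t = ∑ i, (min (v t i) 0) ^ 2` is differentiable along the
solution and vanishes at `s`. Writing `(B v)ᵢ = ∑ⱼ Bᵢⱼ (vⱼ - vᵢ)` (the rows sum to zero) and using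
`Bᵢⱼ ≥ 0` off the diagonal gives `W' ≤ p M W`, where `M` bounds the entries of `B` on the compact
interval `[s, T]`; Grönwall's inequality then forces `W = 0` on `[s, T]`. -/

open Finset Set
open scoped Matrix

theorem hasDerivAt_min_zero_sq (x : ℝ) :
    HasDerivAt (fun y : ℝ => min y 0 ^ 2) (2 * min x 0) x := by
  refine hasDerivAt_of_hasDerivAt_of_ne' (f := fun y => min y 0 ^ 2) (g := fun y => 2 * min y 0)
    (x := 0) (fun y hy => ?_) (by fun_prop) (by fun_prop) x
  rcases hy.lt_or_gt with hy | hy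
  · have hloc : (fun z : ℝ => min z 0 ^ 2) =ᶠ[nhds y] fun z => z ^ 2 := by
      filter_upwards [gt_mem_nhds hy] with z hz using by rw [min_eq_left hz.le]
    simpa [min_eq_left hy.le] using (hasDerivAt_pow 2 y).congr_of_eventuallyEq hloc
  · have hloc : (fun z : ℝ => min z 0 ^ 2) =ᶠ[nhds y] fun _ => 0 := by
      filter_upwards [lt_mem_nhds hy] with z hz using by simp [min_eq_right hz.le]
    simpa [min_eq_right hy.le] using (hasDerivAt_const y (0 : ℝ)).congr_of_eventuallyEq hloc

theorem two_mul_min_zero_mul_sub_le (a b : ℝ) : 2 * min a 0 * (b - a) ≤ min b 0 ^ 2 := by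
  rcases le_total a 0 with ha | ha <;> rcases le_total b 0 with hb | hb <;>
    simp only [min_eq_left, min_eq_right, *] <;> nlinarith [sq_nonneg (a - b)]

theorem Matrix.mulVec_eq_sum_mul_sub {n R : Type*} [Fintype n] [CommRing R] {B : Matrix n n R}
    (hrow : ∀ i, ∑ j, B i j = 0) (v : n → R) (i : n) :
    (B *ᵥ v) i = ∑ j, B i j * (v j - v i) := by
  simp only [Matrix.mulVec, dotProduct, mul_sub, sum_sub_distrib, ← sum_mul, hrow, zero_mul,
    sub_zero]

theorem exists_abs_entry_le_of_continuousOn {α m n : Type*} [TopologicalSpace α] [Fintype m]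
    [Fintype n] {B : α → Matrix m n ℝ} {K : Set α} (hK : IsCompact K) (hB : ContinuousOn B K) :
    ∃ M, ∀ t ∈ K, ∀ i j, |B t i j| ≤ M := by
  obtain ⟨M, hM⟩ := hK.exists_bound_of_continuousOn (f := fun t => Matrix.of.symm (B t)) hB
  exact ⟨M, fun t ht i j =>
    ((norm_le_pi_norm (B t i) j).trans (norm_le_pi_norm (Matrix.of.symm (B t)) i)).trans (hM t ht)⟩

theorem nonpos_of_hasDerivWithinAt_le_mul {f f' : ℝ → ℝ} {K a b : ℝ}
    (hf : ContinuousOn f (Icc a b)) (hf' : ∀ x ∈ Ico a b, HasDerivWithinAt f (f' x) (Ici x) x)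
    (ha : f a ≤ 0) (bound : ∀ x ∈ Ico a b, f' x ≤ K * f x) :
    ∀ x ∈ Icc a b, f x ≤ 0 := by
  intro x hx
  simpa [gronwallBound_ε0_δ0] using le_gronwallBound_of_liminf_deriv_right_le hf
    (fun x hx _ hr => (hf' x hx).liminf_right_slope_le hr) ha
    (fun x hx => (bound x hx).trans_eq (add_zero _).symm) x hx

theorem Matrix.sum_two_mul_min_zero_mul_mulVec_le {n : Type*} [Fintype n] {B : Matrix n n ℝ}
    {M : ℝ} (hoff : ∀ i j, i ≠ j → 0 ≤ B i j) (hrow : ∀ i, ∑ j, B i j = 0)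
    (hM : ∀ i j, |B i j| ≤ M) (v : n → ℝ) :
    ∑ i, 2 * min (v i) 0 * (B *ᵥ v) i ≤ Fintype.card n * M * ∑ i, min (v i) 0 ^ 2 := by
  have hterm : ∀ i j, 2 * min (v i) 0 * (B i j * (v j - v i)) ≤ M * min (v j) 0 ^ 2 := by
    intro i j
    rcases eq_or_ne i j with rfl | hij
    · simpa using mul_nonneg ((abs_nonneg _).trans (hM i i)) (sq_nonneg (min (v i) 0))
    calc 2 * min (v i) 0 * (B i j * (v j - v i))
        = B i j * (2 * min (v i) 0 * (v j - v i)) := by ring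
      _ ≤ B i j * min (v j) 0 ^ 2 :=
          mul_le_mul_of_nonneg_left (two_mul_min_zero_mul_sub_le _ _) (hoff i j hij)
      _ ≤ M * min (v j) 0 ^ 2 :=
          mul_le_mul_of_nonneg_right ((le_abs_self _).trans (hM i j)) (sq_nonneg _)
  calc ∑ i, 2 * min (v i) 0 * (B *ᵥ v) i
      ≤ ∑ _i : n, ∑ j, M * min (v j) 0 ^ 2 := by
        refine sum_le_sum fun i _ => ?_
        rw [Matrix.mulVec_eq_sum_mul_sub hrow, mul_sum]
        exact sum_le_sum fun j _ => hterm i j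
    _ = Fintype.card n * M * ∑ i, min (v i) 0 ^ 2 := by
        rw [sum_const, card_univ, nsmul_eq_mul, mul_assoc, ← mul_sum]

theorem nonneg_of_sum_min_zero_sq_nonpos {n : Type*} [Fintype n] {v : n → ℝ}
    (hv : ∑ i, min (v i) 0 ^ 2 ≤ 0) (i : n) : 0 ≤ v i := by
  have hzero := (sum_eq_zero_iff_of_nonneg fun j _ => sq_nonneg (min (v j) 0)).1
    (hv.antisymm (sum_nonneg fun j _ => sq_nonneg _)) i (mem_univ i)
  exact min_eq_right_iff.1 (pow_eq_zero_iff two_ne_zero |>.1 hzero)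

theorem metzler_preserves_nonneg_general (p : ℕ) (s T : ℝ)
    (B : ℝ → Matrix (Fin p) (Fin p) ℝ)
    (hcont : Continuous B)
    (hoff : ∀ t : ℝ, ∀ i j : Fin p, i ≠ j → 0 ≤ B t i j)
    (hrow : ∀ t : ℝ, ∀ i : Fin p, ∑ j, B t i j = 0)
    (v : ℝ → Fin p → ℝ)
    (hderiv : ∀ t ∈ Set.Icc s T, ∀ i : Fin p,
      HasDerivAt (fun u => v u i) ((B t).mulVec (v t) i) t)
    (hinit : ∀ i : Fin p, 0 ≤ v s i) :
    ∀ t ∈ Set.Icc s T, ∀ i : Fin p, 0 ≤ v t i := by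
  obtain ⟨M, hM⟩ := exists_abs_entry_le_of_continuousOn isCompact_Icc hcont.continuousOn
  set W : ℝ → ℝ := fun t => ∑ i, min (v t i) 0 ^ 2
  have hW : ∀ t ∈ Icc s T, HasDerivAt W (∑ i, 2 * min (v t i) 0 * (B t *ᵥ v t) i) t :=
    fun t ht => HasDerivAt.fun_sum fun i _ => (hasDerivAt_min_zero_sq _).comp t (hderiv t ht i)
  have hW_nonpos : ∀ t ∈ Icc s T, W t ≤ 0 :=
    nonpos_of_hasDerivWithinAt_le_mul (fun t ht => (hW t ht).continuousAt.continuousWithinAt)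
      (fun t ht => (hW t (Ico_subset_Icc_self ht)).hasDerivWithinAt)
      (by simp [W, min_eq_right (hinit _)])
      (fun t ht => Matrix.sum_two_mul_min_zero_mul_mulVec_le (hoff t) (hrow t)
        (hM t (Ico_subset_Icc_self ht)) (v t))
  exact fun t ht => nonneg_of_sum_min_zero_sq_nonpos (hW_nonpos t ht)

/-- Discrete maximum principle: a linear ODE with Metzler generator with zero row sums
preserves nonnegativity of the solution. -/
theorem metzler_preserves_nonneg (p : ℕ) (s T : ℝ) (hsT : s ≤ T)
    (B : ℝ → Matrix (Fin p) (Fin p) ℝ)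
    (hcont : Continuous B)
    (hoff : ∀ t : ℝ, ∀ i j : Fin p, i ≠ j → 0 ≤ B t i j)
    (hrow : ∀ t : ℝ, ∀ i : Fin p, ∑ j, B t i j = 0)
    (v : ℝ → Fin p → ℝ)
    (hderiv : ∀ t ∈ Set.Icc s T, ∀ i : Fin p,
      HasDerivAt (fun u => v u i) ((B t).mulVec (v t) i) t)
    (hinit : ∀ i : Fin p, 0 ≤ v s i) :
    ∀ t ∈ Set.Icc s T, ∀ i : Fin p, 0 ≤ v t i :=
  metzler_preserves_nonneg_general p s T B hcont hoff hrow v hderiv hinit
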